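/- For α, β > -1 and n ≥ 1, the extended Jacobi polynomials satisfy ((1+t)/2) J_{n-1}^{α+1,β+1}(t) = n J_n^{α,β}(t) + ((n+β)/(2n+α+β)) J_{n-1}^{α+1,β}(t). -/

import Mathlib

open Finset MeasureTheory

/-- Pochhammer symbol `(a)_m` (rising factorial). -/
noncomputable def poch (a : ℝ) (m : ℕ) : ℝ := (ascPochhammer ℝ m).eval a

/-- Extended Jacobi polynomial `J_n^{α,β}(t)`.  Terms with vanishing denominator
(which are exactly the terms with index below `ι₀`) are `0` by the division
convention, so this agrees with the paper's definition. -/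
noncomputable def J (α β : ℝ) (n : ℕ) (t : ℝ) : ℝ :=
  ∑ k ∈ Finset.range (n + 1),
    poch ((k : ℝ) + α + 1) (n - k) /
      (((n - k).factorial : ℝ) * (k.factorial : ℝ) *
        poch ((n : ℝ) + α + β + (k : ℝ) + 1) (n - k)) *
      ((t - 1) / 2) ^ k

/-- Classical Jacobi polynomial `P_n^{(α,β)}(t)`. -/
noncomputable def P (α β : ℝ) (n : ℕ) (t : ℝ) : ℝ :=
  ∑ k ∈ Finset.range (n + 1),
    poch ((k : ℝ) + α + 1) (n - k) * poch ((n : ℝ) + α + β + 1) k /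
      (((n - k).factorial : ℝ) * (k.factorial : ℝ)) * ((t - 1) / 2) ^ k

/-! With `x = (t - 1) / 2` we have `(1 + t) / 2 = 1 + x`, and all three extended Jacobi polynomials
are explicit polynomials in `x`, so the identity is a comparison of coefficients. After pulling out
the Pochhammer factors common to the four coefficients involved, the coefficient of `x ^ j`
(`j + p = n - 1`, `N = 2j + p + α + β + 2`) reduces to the polynomial identity
`(p + 1) N + j (j + α + 1) = n (j + α + 1) + (p + 1) (n + β)`. -/

open scoped Nat

lemma poch_succ_left (a : ℝ) (p : ℕ) : poch a (p + 1) = a * poch (a + 1) p := by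
  simp [poch, ascPochhammer_succ_left, Polynomial.eval_comp]

lemma poch_eq_mul_poch_add_one_div (a : ℝ) (p : ℕ) (h : a + p ≠ 0) :
    poch a p = a * poch (a + 1) p / (a + p) := by
  rw [eq_div_iff h, ← poch_succ_left, poch, poch, ascPochhammer_succ_eval]

noncomputable def jacobiCoeff (α β : ℝ) (n k : ℕ) : ℝ :=
  poch ((k : ℝ) + α + 1) (n - k) /
    ((n - k)! * k ! * poch ((n : ℝ) + α + β + (k : ℝ) + 1) (n - k))

lemma J_eq_sum (α β : ℝ) (n : ℕ) (t : ℝ) :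
    J α β n t = ∑ k ∈ range (n + 1), jacobiCoeff α β n k * ((t - 1) / 2) ^ k :=
  rfl

lemma jacobiCoeff_add_left (α β : ℝ) (k p : ℕ) :
    jacobiCoeff α β (k + p) k =
      poch (k + α + 1) p / (p ! * k ! * poch (2 * k + p + α + β + 1) p) := by
  simp only [jacobiCoeff, Nat.add_sub_cancel_left]
  congr 3
  push_cast
  ring

lemma jacobiCoeff_self (α β : ℝ) (n : ℕ) : jacobiCoeff α β n n = 1 / n ! := by
  simp [jacobiCoeff, poch]

lemma one_add_mul_sum_range {R : Type*} [CommSemiring R] (A : ℕ → R) (x : R) (m : ℕ) :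
    (1 + x) * ∑ k ∈ range (m + 1), A k * x ^ k =
      A 0 + ∑ k ∈ range m, (A (k + 1) + A k) * x ^ (k + 1) + A m * x ^ (m + 1) := by
  induction m with
  | zero =>
    simp only [zero_add, sum_range_one, range_zero, sum_empty, pow_zero, pow_one]
    ring
  | succ m ih => rw [sum_range_succ, mul_add, ih, sum_range_succ]; ring

lemma jacobiCoeff_contiguous_zero (α β : ℝ) (hs : -2 < α + β) (m : ℕ) :
    jacobiCoeff (α + 1) (β + 1) m 0 =
      ((m + 1 : ℕ) : ℝ) * jacobiCoeff α β (m + 1) 0 +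
        (((m + 1 : ℕ) : ℝ) + β) / (2 * ((m + 1 : ℕ) : ℝ) + α + β) *
          jacobiCoeff (α + 1) β m 0 := by
  have hm : (0 : ℝ) ≤ m := m.cast_nonneg
  have hA : jacobiCoeff (α + 1) (β + 1) m 0 =
      poch (α + 2) m / (m ! * poch (m + α + β + 3) m) := by
    rw [← zero_add m, jacobiCoeff_add_left]; push_cast; ring_nf
  have hB : jacobiCoeff α β (m + 1) 0 =
      (α + 1) * poch (α + 2) m /
        ((m + 1) * m ! * ((m + α + β + 2) * poch (m + α + β + 3) m)) := by
    rw [← zero_add (m + 1), jacobiCoeff_add_left, poch_succ_left, poch_succ_left,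
      Nat.factorial_succ]
    push_cast; ring_nf
  have hC : jacobiCoeff (α + 1) β m 0 = poch (α + 2) m / (m ! * poch (m + α + β + 2) m) := by
    rw [← zero_add m, jacobiCoeff_add_left]; push_cast; ring_nf
  have hW : poch (m + α + β + 2) m =
      (m + α + β + 2) * poch (m + α + β + 3) m / (2 * (m + 1 : ℝ) + α + β) := by
    rw [poch_eq_mul_poch_add_one_div _ _ (by linarith)]; ring_nf
  have hV : 0 < poch (m + α + β + 3) m := ascPochhammer_pos m _ (by linarith)
  have hN : m + α + β + 2 ≠ 0 := by linarith
  have hd : 2 * (m + 1 : ℝ) + α + β ≠ 0 := by linarith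
  rw [hA, hB, hC, hW]
  push_cast
  field_simp
  ring

lemma jacobiCoeff_contiguous_succ (α β : ℝ) (hs : -2 < α + β) {m k : ℕ} (hkm : k < m) :
    jacobiCoeff (α + 1) (β + 1) m (k + 1) + jacobiCoeff (α + 1) (β + 1) m k =
      ((m + 1 : ℕ) : ℝ) * jacobiCoeff α β (m + 1) (k + 1) +
        (((m + 1 : ℕ) : ℝ) + β) / (2 * ((m + 1 : ℕ) : ℝ) + α + β) *
          jacobiCoeff (α + 1) β m (k + 1) := by
  obtain ⟨p, rfl⟩ : ∃ p, m = k + 1 + p := ⟨m - (k + 1), by omega⟩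
  have hk : (0 : ℝ) ≤ k := k.cast_nonneg
  have hp : (0 : ℝ) ≤ p := p.cast_nonneg
  have hA₁ : jacobiCoeff (α + 1) (β + 1) (k + 1 + p) (k + 1) =
      poch (k + α + 3) p / (p ! * (k + 1)! * poch (2 * k + p + α + β + 5) p) := by
    rw [jacobiCoeff_add_left]; push_cast; ring_nf
  have hA₀ : jacobiCoeff (α + 1) (β + 1) (k + 1 + p) k =
      (k + α + 2) * poch (k + α + 3) p /
        ((p + 1) * p ! * k ! * ((2 * k + p + α + β + 4) * poch (2 * k + p + α + β + 5) p)) := by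
    rw [show k + 1 + p = k + (p + 1) by ring, jacobiCoeff_add_left, poch_succ_left,
      poch_succ_left, Nat.factorial_succ]
    push_cast; ring_nf
  have hB : jacobiCoeff α β (k + 1 + p + 1) (k + 1) =
      (k + α + 2) * poch (k + α + 3) p /
        ((p + 1) * p ! * (k + 1)! *
          ((2 * k + p + α + β + 4) * poch (2 * k + p + α + β + 5) p)) := by
    rw [add_assoc, jacobiCoeff_add_left, poch_succ_left, poch_succ_left, Nat.factorial_succ]
    push_cast; ring_nf
  have hC : jacobiCoeff (α + 1) β (k + 1 + p) (k + 1) =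
      poch (k + α + 3) p / (p ! * (k + 1)! * poch (2 * k + p + α + β + 4) p) := by
    rw [jacobiCoeff_add_left]; push_cast; ring_nf
  have hW : poch (2 * k + p + α + β + 4) p =
      (2 * k + p + α + β + 4) * poch (2 * k + p + α + β + 5) p /
        (2 * (k + 1 + p + 1 : ℝ) + α + β) := by
    rw [poch_eq_mul_poch_add_one_div _ _ (by linarith)]; ring_nf
  have hV : 0 < poch (2 * k + p + α + β + 5) p := ascPochhammer_pos p _ (by linarith)
  have hN : 2 * k + p + α + β + 4 ≠ 0 := by linarith
  have hd : 2 * (k + 1 + p + 1 : ℝ) + α + β ≠ 0 := by linarith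
  rw [hA₁, hA₀, hB, hC, hW, Nat.factorial_succ k]
  push_cast
  -- `field_simp` only recognises `hN` when `N` is an atom
  generalize hN_def : (2 * k + p + α + β + 4 : ℝ) = N at *
  field_simp
  rw [← hN_def]
  ring

lemma jacobiCoeff_contiguous_self (α β : ℝ) (m : ℕ) :
    jacobiCoeff (α + 1) (β + 1) m m =
      ((m + 1 : ℕ) : ℝ) * jacobiCoeff α β (m + 1) (m + 1) := by
  rw [jacobiCoeff_self, jacobiCoeff_self, Nat.factorial_succ]
  push_cast
  field_simp

theorem stmt10 (α β : ℝ) (hα : -1 < α) (hβ : -1 < β) (n : ℕ) (hn : 1 ≤ n) (t : ℝ) :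
    (1 + t) / 2 * J (α + 1) (β + 1) (n - 1) t =
      (n : ℝ) * J α β n t +
        ((n : ℝ) + β) / (2 * (n : ℝ) + α + β) * J (α + 1) β (n - 1) t := by
  obtain ⟨m, rfl⟩ : ∃ m, n = m + 1 := ⟨n - 1, by omega⟩
  have hs : -2 < α + β := by linarith
  rw [Nat.add_sub_cancel, J_eq_sum, J_eq_sum, J_eq_sum,
    show (1 + t) / 2 = 1 + (t - 1) / 2 by ring]
  generalize (t - 1) / 2 = x
  rw [one_add_mul_sum_range, sum_range_succ _ (m + 1), sum_range_succ', sum_range_succ',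
    jacobiCoeff_contiguous_zero α β hs, jacobiCoeff_contiguous_self,
    sum_congr rfl fun k hk => by rw [jacobiCoeff_contiguous_succ α β hs (mem_range.mp hk)]]
  simp only [add_mul, mul_add, mul_sum, sum_add_distrib, mul_assoc]
  ring
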